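/- Let A be the algebra of all upper-triangular complex 2×2 matrices, i.e. matrices x with entries x₁₁, x₁₂, x₂₂ ∈ ℂ and x₂₁ = 0, and define Δ : A → A by: Δ(x) = 0 if x₁₁ ≠ x₂₂, and Δ(x) is the matrix whose only nonzero entry is the (1,2)-entry equal to 2·x₁₂ if x₁₁ = x₂₂. Then Δ is a 2-local derivation on A which is not a derivation (Δ is not additive). -/

import Mathlib

/-- The algebra of upper-triangular complex `2×2` matrices. -/
def upperTriangular2 : Subalgebra ℂ (Matrix (Fin 2) (Fin 2) ℂ) where
  carrier := {x | x 1 0 = 0}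
  mul_mem' := by
    intro x y hx hy
    simp only [Set.mem_setOf_eq] at *
    simp [Matrix.mul_apply, Fin.sum_univ_two, hx, hy]
  add_mem' := by
    intro x y hx hy
    simp only [Set.mem_setOf_eq] at *
    simp [hx, hy]
  one_mem' := by
    simp [Matrix.one_apply]
  zero_mem' := by
    simp
  algebraMap_mem' := by
    intro c
    simp [Matrix.algebraMap_matrix_apply]

open Classical in
/-- The map `Δ` on the upper-triangular `2×2` matrices: `Δ(x) = 0` if
`x₁₁ ≠ x₂₂`, and `Δ(x)` is the matrix whose only nonzero entry is the
`(1,2)`-entry `2·x₁₂` if `x₁₁ = x₂₂`. -/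
noncomputable def Δtriangular (x : upperTriangular2) : upperTriangular2 :=
  if (x : Matrix (Fin 2) (Fin 2) ℂ) 0 0 = (x : Matrix (Fin 2) (Fin 2) ℂ) 1 1 then
    ⟨Matrix.single 0 1 (2 * (x : Matrix (Fin 2) (Fin 2) ℂ) 0 1), by
      show Matrix.single (0 : Fin 2) (1 : Fin 2)
        (2 * (x : Matrix (Fin 2) (Fin 2) ℂ) 0 1) 1 0 = 0
      simp [Matrix.single]⟩
  else 0

/-!
Every `a ∈ T₂` gives the inner derivation `x ↦ a x - x a`; for `a = s E₁₁ + t E₁₂` it is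
`x ↦ (s x₁₂ + t (x₂₂ - x₁₁)) E₁₂`. On an `x` with `x₁₁ = x₂₂` it agrees with `Δ` as soon as
`s = 2`, whatever `t` is; on an `x` with `x₁₁ ≠ x₂₂`, where `Δ x = 0`, it agrees with `Δ` for every
`s` once `t` is chosen to kill `x`. So any two points are matched by one such derivation (take
`s = 0` when neither has equal diagonal entries). Additivity fails at `E₁₁ + E₁₂` and `E₂₂`:
`Δ` vanishes on both, but their sum is `1 + E₁₂`, which `Δ` sends to `2 E₁₂`.
-/

section InnerDerivation

variable (R : Type*) {A : Type*} [CommSemiring R] [Ring A] [Algebra R A]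

def innerDerivation (a : A) : A →ₗ[R] A :=
  LinearMap.mulLeft R a - LinearMap.mulRight R a

variable {R}

@[simp]
theorem innerDerivation_apply (a x : A) : innerDerivation R a x = a * x - x * a := rfl

theorem innerDerivation_mul (a u v : A) :
    innerDerivation R a (u * v) =
      innerDerivation R a u * v + u * innerDerivation R a v := by
  simp only [innerDerivation_apply, mul_sub, sub_mul, mul_assoc]
  abel

end InnerDerivation

local notation "M₂" => Matrix (Fin 2) (Fin 2) ℂ

local notation "T₂" => _root_.upperTriangular2

namespace upperTriangular2

def ofRow (s t : ℂ) : T₂ := ⟨!![s, t; 0, 0], rfl⟩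

theorem coe_innerDerivation_ofRow (s t : ℂ) (x : T₂) :
    (innerDerivation ℂ (ofRow s t) x : M₂) =
      Matrix.single 0 1 (s * (x : M₂) 0 1 +
        t * ((x : M₂) 1 1 - (x : M₂) 0 0)) := by
  have hx : (x : M₂) 1 0 = 0 := x.2
  ext i j
  fin_cases i <;> fin_cases j <;>
    simp [ofRow, Matrix.mul_apply, Matrix.vecMul, dotProduct, Fin.sum_univ_two, hx] <;> ring

theorem coe_Δtriangular_of_eq {x : T₂} (hx : (x : M₂) 0 0 = (x : M₂) 1 1) :
    (Δtriangular x : M₂) = Matrix.single 0 1 (2 * (x : M₂) 0 1) := by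
  simp [Δtriangular, hx]

theorem Δtriangular_of_ne {x : T₂} (hx : (x : M₂) 0 0 ≠ (x : M₂) 1 1) : Δtriangular x = 0 := by
  simp [Δtriangular, hx]

theorem Δtriangular_eq_innerDerivation_of_eq {x : T₂} (hx : (x : M₂) 0 0 = (x : M₂) 1 1)
    (t : ℂ) : Δtriangular x = innerDerivation ℂ (ofRow 2 t) x := by
  ext : 1
  rw [coe_Δtriangular_of_eq hx, coe_innerDerivation_ofRow, hx, sub_self, mul_zero, add_zero]

theorem Δtriangular_eq_innerDerivation_of_ne {x : T₂} (hx : (x : M₂) 0 0 ≠ (x : M₂) 1 1)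
    {s t : ℂ} (hst : s * (x : M₂) 0 1 = t * ((x : M₂) 0 0 - (x : M₂) 1 1)) :
    Δtriangular x = innerDerivation ℂ (ofRow s t) x := by
  ext : 1
  rw [Δtriangular_of_ne hx, coe_innerDerivation_ofRow, hst]
  simp [← mul_add]

theorem exists_innerDerivation_eq_Δtriangular_pair (x y : T₂) :
    ∃ s t : ℂ, Δtriangular x = innerDerivation ℂ (ofRow s t) x ∧
      Δtriangular y = innerDerivation ℂ (ofRow s t) y := by
  by_cases hx : (x : M₂) 0 0 = (x : M₂) 1 1 <;> by_cases hy : (y : M₂) 0 0 = (y : M₂) 1 1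
  · exact ⟨2, 0, Δtriangular_eq_innerDerivation_of_eq hx _,
      Δtriangular_eq_innerDerivation_of_eq hy _⟩
  · refine ⟨2, 2 * (y : M₂) 0 1 / ((y : M₂) 0 0 - (y : M₂) 1 1),
      Δtriangular_eq_innerDerivation_of_eq hx _, Δtriangular_eq_innerDerivation_of_ne hy ?_⟩
    rw [div_mul_cancel₀ _ (sub_ne_zero.mpr hy)]
  · refine ⟨2, 2 * (x : M₂) 0 1 / ((x : M₂) 0 0 - (x : M₂) 1 1),
      Δtriangular_eq_innerDerivation_of_ne hx ?_, Δtriangular_eq_innerDerivation_of_eq hy _⟩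
    rw [div_mul_cancel₀ _ (sub_ne_zero.mpr hx)]
  · exact ⟨0, 0, Δtriangular_eq_innerDerivation_of_ne hx (by simp),
      Δtriangular_eq_innerDerivation_of_ne hy (by simp)⟩

theorem Δtriangular_not_additive :
    ¬ ∀ x y : T₂, Δtriangular (x + y) = Δtriangular x + Δtriangular y := by
  intro h
  let a : T₂ := ⟨!![1, 1; 0, 0], rfl⟩
  let b : T₂ := ⟨!![0, 0; 0, 1], rfl⟩
  have hab := congrArg (fun z : T₂ ↦ (z : M₂) 0 1) (h a b)
  rw [Δtriangular_of_ne (x := a) (by simp [a]), Δtriangular_of_ne (x := b) (by simp [b]),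
    coe_Δtriangular_of_eq (by simp [a, b])] at hab
  simp [a, b] at hab

end upperTriangular2

/-- **Zhang–Li.**  The map `Δ` above is a 2-local derivation on the algebra of
upper-triangular complex `2×2` matrices which is not additive, hence not a
derivation. -/
theorem two_local_derivation_not_derivation_upper_triangular :
    (∀ x y : upperTriangular2,
      ∃ D : upperTriangular2 →ₗ[ℂ] upperTriangular2,
        (∀ u v, D (u * v) = D u * v + u * D v) ∧
        Δtriangular x = D x ∧ Δtriangular y = D y) ∧
    ¬ (∀ x y : upperTriangular2,
        Δtriangular (x + y) = Δtriangular x + Δtriangular y) ∧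
    ¬ (∃ D : upperTriangular2 →ₗ[ℂ] upperTriangular2,
        (∀ u v, D (u * v) = D u * v + u * D v) ∧
        ∀ x, Δtriangular x = D x) := by
  refine ⟨fun x y ↦ ?_, upperTriangular2.Δtriangular_not_additive, ?_⟩
  · obtain ⟨s, t, hx, hy⟩ := upperTriangular2.exists_innerDerivation_eq_Δtriangular_pair x y
    exact ⟨innerDerivation ℂ (upperTriangular2.ofRow s t), innerDerivation_mul _, hx, hy⟩
  · rintro ⟨D, -, hD⟩
    exact upperTriangular2.Δtriangular_not_additive fun x y ↦ by rw [hD, hD, hD, map_add]
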